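/- arXiv:1607.00847 — 4 statements merged into one kernel-verified Lean document; each statement's English description precedes it below -/
import Mathlib

section
/- Let d ≥ 1, let Σ be a symmetric positive definite d×d real matrix, let z ∈ ℝ^d be nonzero, set υ = zᵀΣz, and let α ≥ 0 and φ > 0. Define u = (1/4)·( −αυφ + √(α²υ²φ² + 4υ) )² and β = αφ/(√u + υαφ). Then u > 0, 0 ≤ β·υ < 1, and the updated matrix Σ' = Σ − β·Σ z zᵀ Σ is symmetric positive definite. -/
open Matrix Real

/-!
Write `c = αυφ` and `s = √(c² + 4υ)`. Since `s > c ≥ 0`, `√u = (s - c)/2`, hence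
`βυ = 2c/(s + c) ∈ [0, 1)`. The quadratic form of `Σ'` is `xᵀΣx - β (zᵀΣx)²`, and Cauchy–Schwarz
for the inner product defined by `Σ` bounds it below by `(1 - βυ) xᵀΣx > 0`.
-/

theorem lt_sqrt_sq_add_of_pos (c : ℝ) {t : ℝ} (ht : 0 < t) : c < √(c ^ 2 + t) :=
  calc c ≤ |c| := le_abs_self c
    _ = √(c ^ 2) := (sqrt_sq_eq_abs c).symm
    _ < √(c ^ 2 + t) := sqrt_lt_sqrt (sq_nonneg c) (by linarith)

namespace Matrix

variable {n : Type*} [Fintype n]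

theorem dotProduct_mul_vecMulVec_mul_mulVec {R : Type*} [CommSemiring R]
    (A B : Matrix n n R) (v w x y : n → R) :
    x ⬝ᵥ (A * vecMulVec v w * B) *ᵥ y = (x ⬝ᵥ A *ᵥ v) * (w ⬝ᵥ B *ᵥ y) := by
  rw [mul_vecMulVec, vecMulVec_mul, vecMulVec_mulVec, dotProduct_mulVec w B y]
  simp [mul_comm]

theorem PosSemidef.dotProduct_mulVec_mul_le {S : Matrix n n ℝ} (hS : S.PosSemidef)
    (x y : n → ℝ) :
    (x ⬝ᵥ S *ᵥ y) * (y ⬝ᵥ S *ᵥ x) ≤ (x ⬝ᵥ S *ᵥ x) * (y ⬝ᵥ S *ᵥ y) := by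
  classical
  simpa only [toBilin'_apply'] using
    S.toBilin'.apply_mul_apply_le_of_forall_zero_le (fun v ↦ by
      simpa only [toBilin'_apply', star_trivial] using hS.dotProduct_mulVec_nonneg v) x y

theorem PosDef.sub_smul_mul_vecMulVec_mul {S : Matrix n n ℝ} (hS : S.PosDef) (z : n → ℝ)
    {β : ℝ} (hβ : 0 ≤ β) (hβz : β * (z ⬝ᵥ S *ᵥ z) < 1) :
    (S - β • (S * vecMulVec z z * S)).PosDef := by
  have hP : (S * vecMulVec z z * S).IsHermitian := by
    have := ((posSemidef_vecMulVec_self_star z).conjTranspose_mul_mul_same S).1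
    rwa [hS.1.eq, star_trivial] at this
  refine of_dotProduct_mulVec_pos (hS.1.sub (hP.smul (IsSelfAdjoint.all β))) fun x hx ↦ ?_
  have hx : 0 < x ⬝ᵥ S *ᵥ x := hS.dotProduct_mulVec_pos hx
  have hcs := hS.posSemidef.dotProduct_mulVec_mul_le x z
  rw [star_trivial, sub_mulVec, dotProduct_sub, smul_mulVec, dotProduct_smul, smul_eq_mul,
    dotProduct_mul_vecMulVec_mul_mulVec]
  nlinarith [mul_le_mul_of_nonneg_left hcs hβ]

end Matrix

theorem cbr_covariance_update_posDef_general
    (d : ℕ)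
    (S : Matrix (Fin d) (Fin d) ℝ) (hS : S.PosDef)
    (z : Fin d → ℝ) (hz : z ≠ 0)
    (υ : ℝ) (hυ : υ = z ⬝ᵥ S.mulVec z)
    (α : ℝ) (hα : 0 ≤ α) (φ : ℝ) (hφ : 0 < φ)
    (u β : ℝ)
    (hu : u = (1/4) * (-(α * υ * φ) + Real.sqrt (α^2 * υ^2 * φ^2 + 4 * υ))^2)
    (hβ : β = α * φ / (Real.sqrt u + υ * α * φ))
    (S' : Matrix (Fin d) (Fin d) ℝ)
    (hS' : S' = S - β • (S * vecMulVec z z * S)) :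
    0 < u ∧ 0 ≤ β * υ ∧ β * υ < 1 ∧ S'.PosDef := by
  have hυ0 : 0 < υ := by simpa [hυ] using hS.dotProduct_mulVec_pos hz
  set c := α * υ * φ
  set s := √(α ^ 2 * υ ^ 2 * φ ^ 2 + 4 * υ)
  have hc : 0 ≤ c := by positivity
  have hcs : c < s := by
    simpa only [c, s, mul_pow] using lt_sqrt_sq_add_of_pos c (by positivity : 0 < 4 * υ)
  have hu' : u = ((s - c) / 2) ^ 2 := by rw [hu]; ring
  have hβ' : β = 2 * (α * φ) / (s + c) := by
    rw [hβ, hu', sqrt_sq (by linarith)]; field_simp; ring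
  have hβ0 : 0 ≤ β := by rw [hβ']; exact div_nonneg (by positivity) (by linarith)
  have hβυ : β * υ < 1 := by
    rw [hβ', div_mul_eq_mul_div, div_lt_one (by linarith)]; linarith
  refine ⟨hu' ▸ pow_pos (by linarith) 2, mul_nonneg hβ0 hυ0.le, hβυ, ?_⟩
  exact hS' ▸ hS.sub_smul_mul_vecMulVec_mul z hβ0 (hυ ▸ hβυ)

/-- **The CBR covariance update preserves positive definiteness.** With
`u = ¼(−αυφ + √(α²υ²φ² + 4υ))²` and `β = αφ/(√u + υαφ)`, one has `u > 0`,
`0 ≤ βυ < 1`, and `Σ' = Σ − β Σ z zᵀ Σ` is symmetric positive definite. -/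
theorem cbr_covariance_update_posDef
    (d : ℕ) (hd : 1 ≤ d)
    (S : Matrix (Fin d) (Fin d) ℝ) (hS : S.PosDef)
    (z : Fin d → ℝ) (hz : z ≠ 0)
    (υ : ℝ) (hυ : υ = z ⬝ᵥ S.mulVec z)
    (α : ℝ) (hα : 0 ≤ α) (φ : ℝ) (hφ : 0 < φ)
    (u β : ℝ)
    (hu : u = (1/4) * (-(α * υ * φ) + Real.sqrt (α^2 * υ^2 * φ^2 + 4 * υ))^2)
    (hβ : β = α * φ / (Real.sqrt u + υ * α * φ))
    (S' : Matrix (Fin d) (Fin d) ℝ)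
    (hS' : S' = S - β • (S * vecMulVec z z * S)) :
    0 < u ∧ 0 ≤ β * υ ∧ β * υ < 1 ∧ S'.PosDef :=
  cbr_covariance_update_posDef_general d S hS z hz υ hυ α hα φ hφ u β hu hβ S' hS'
end

section
/- Let d ≥ 1, let Σ be a symmetric positive definite d×d real matrix, let z ∈ ℝ^d be nonzero, set υ = zᵀΣz, and let α ≥ 0 and φ > 0. Define u = (1/4)·( −αυφ + √(α²υ²φ² + 4υ) )², β = αφ/(√u + υαφ), and Σ' = Σ − β·Σ z zᵀ Σ. Then zᵀ Σ' z = u; that is, the quantity u appearing in the update coefficients equals exactly the variance of the updated Gaussian model in the direction z. -/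
open Matrix Real

/-!
Since `zᵀ (Σ z zᵀ Σ) z = υ²`, the updated variance is `υ - β υ²`. Writing `c = αφ`, the number
`r = (-cυ + √(c²υ² + 4υ))/2` is the nonnegative root of `r (r + cυ) = υ`, so `√u = r`,
`β = c / (r + cυ)`, and the root equation turns `υ - β υ²` into `r² = u`.
-/

theorem Matrix.dotProduct_mul_vecMulVec_mul_mulVec_s7 {m n : Type*} [Fintype m] [Fintype n]
    {R : Type*} [CommSemiring R] (A : Matrix m n R) (B : Matrix n m R) (x w : m → R)
    (y y' : n → R) :
    x ⬝ᵥ (A * vecMulVec y y' * B) *ᵥ w = (x ⬝ᵥ A *ᵥ y) * (y' ⬝ᵥ B *ᵥ w) := by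
  rw [mul_vecMulVec, vecMulVec_mul, vecMulVec_mulVec, ← dotProduct_mulVec, op_smul_eq_smul,
    dotProduct_smul, smul_eq_mul, mul_comm]

theorem nonneg_and_mul_add_eq_of_two_mul_add_eq_sqrt {c υ r : ℝ} (hυ : 0 ≤ υ)
    (hr : 2 * r + c * υ = √(c ^ 2 * υ ^ 2 + 4 * υ)) :
    0 ≤ r ∧ r * (r + c * υ) = υ := by
  have hs : √(c ^ 2 * υ ^ 2 + 4 * υ) ^ 2 = c ^ 2 * υ ^ 2 + 4 * υ := sq_sqrt (by positivity)
  have habs : |c * υ| ≤ √(c ^ 2 * υ ^ 2 + 4 * υ) :=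
    abs_le_of_sq_le_sq' (by rw [sq_abs, hs, mul_pow]; linarith) (sqrt_nonneg _) |>.2
  rw [← hr] at habs hs
  exact ⟨by linarith [le_abs_self (c * υ)], by linear_combination hs / 4⟩

theorem sub_div_mul_eq_sq_of_mul_add_eq {r c υ : ℝ} (hr : r * (r + c * υ) = υ) :
    υ - c / (r + c * υ) * (υ * υ) = r ^ 2 := by
  rcases eq_or_ne (r + c * υ) 0 with h | h
  · have hυ : υ = 0 := by rw [← hr, h, mul_zero]
    subst hυ
    simp_all
  · have hnum : c * (υ * υ) = (υ - r ^ 2) * (r + c * υ) := by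
      linear_combination r * hr
    rw [div_mul_eq_mul_div, hnum, mul_div_cancel_right₀ _ h]
    ring

theorem cbr_updated_variance_eq_general
    (d : ℕ)
    (S : Matrix (Fin d) (Fin d) ℝ) (hS : S.PosDef)
    (z : Fin d → ℝ)
    (υ : ℝ) (hυ : υ = z ⬝ᵥ S.mulVec z)
    (α : ℝ) (φ : ℝ)
    (u β : ℝ)
    (hu : u = (1/4) * (-(α * υ * φ) + Real.sqrt (α^2 * υ^2 * φ^2 + 4 * υ))^2)
    (hβ : β = α * φ / (Real.sqrt u + υ * α * φ))
    (S' : Matrix (Fin d) (Fin d) ℝ)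
    (hS' : S' = S - β • (S * vecMulVec z z * S)) :
    z ⬝ᵥ S'.mulVec z = u := by
  have hυ_nonneg : 0 ≤ υ := hυ ▸ by simpa using hS.posSemidef.dotProduct_mulVec_nonneg z
  set r := (-(α * υ * φ) + √(α ^ 2 * υ ^ 2 * φ ^ 2 + 4 * υ)) / 2
  obtain ⟨hr_nonneg, hroot⟩ : 0 ≤ r ∧ r * (r + α * φ * υ) = υ :=
    nonneg_and_mul_add_eq_of_two_mul_add_eq_sqrt hυ_nonneg (by simp only [r]; ring_nf)
  have hu_sq : u = r ^ 2 := by rw [hu]; ring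
  have hsqrt_u : √u = r := by rw [hu_sq, sqrt_sq hr_nonneg]
  have hquad : z ⬝ᵥ S' *ᵥ z = υ - β * (υ * υ) := by
    rw [hS', sub_mulVec, dotProduct_sub, smul_mulVec, dotProduct_smul,
      dotProduct_mul_vecMulVec_mul_mulVec_s7, ← hυ, smul_eq_mul]
  rw [hquad, hβ, hsqrt_u, hu_sq, show υ * α * φ = α * φ * υ by ring]
  exact sub_div_mul_eq_sq_of_mul_add_eq hroot

/-- **The quantity `u` is the updated variance in the direction `z`.** With
`u = ¼(−αυφ + √(α²υ²φ² + 4υ))²`, `β = αφ/(√u + υαφ)` and `Σ' = Σ − β Σ z zᵀ Σ`,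
one has `zᵀ Σ' z = u`. -/
theorem cbr_updated_variance_eq
    (d : ℕ) (hd : 1 ≤ d)
    (S : Matrix (Fin d) (Fin d) ℝ) (hS : S.PosDef)
    (z : Fin d → ℝ) (hz : z ≠ 0)
    (υ : ℝ) (hυ : υ = z ⬝ᵥ S.mulVec z)
    (α : ℝ) (hα : 0 ≤ α) (φ : ℝ) (hφ : 0 < φ)
    (u β : ℝ)
    (hu : u = (1/4) * (-(α * υ * φ) + Real.sqrt (α^2 * υ^2 * φ^2 + 4 * υ))^2)
    (hβ : β = α * φ / (Real.sqrt u + υ * α * φ))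
    (S' : Matrix (Fin d) (Fin d) ℝ)
    (hS' : S' = S - β • (S * vecMulVec z z * S)) :
    z ⬝ᵥ S'.mulVec z = u :=
  cbr_updated_variance_eq_general d S hS z υ hυ α φ u β hu hβ S' hS'
end

section
/- Let d ≥ 1, let Σ be a symmetric positive definite d×d real matrix, let z ∈ ℝ^d be nonzero, let μ ∈ ℝ^d, y ∈ {−1,+1}, and φ > 0. Set υ = zᵀΣz, m = y·(μ·z), ψ = 1 + φ²/2, ζ = 1 + φ², and let α = (1/(υζ))·( −mψ + √(m²φ⁴/4 + υφ²ζ) ) be the unclipped update coefficient, assumed to satisfy α ≥ 0. Define u = (1/4)·( −αυφ + √(α²υ²φ² + 4υ) )², β = αφ/(√u + υαφ), μ' = μ + α·y·Σz, and Σ' = Σ − β·Σ z zᵀ Σ. Then y·(μ'·z) = φ·√(zᵀ Σ' z); that is, after the update the signed margin equals exactly φ times the standard deviation of the updated model in the direction z, so the loss max(0, φ√(zᵀΣ'z) − y μ'·z) is zero. -/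
/-!
Write `υ = zᵀΣz` and `a = αυφ`. Since `y² = 1` the update moves the margin to `m + αυ`, and,
`ΣzzᵀΣ` being rank one, the variance along `z` to `υ - βυ²`. The quantity `√u` is the positive
root `t` of `t² + a t = υ`, and `β` is chosen so that `υ - βυ² = t²`. The formula for `α` says that
`x = αυ` is the root of `ζx² + 2mψx + m² = υφ²` with `m + x ≥ 0`; this quadratic is
`(m + x)² + φ² x (m + x) = υφ²`, so `(m + αυ)/φ` is a nonnegative root of `t² + a t = υ`, hence
equals `t`, and the margin is `φ t = φ √(zᵀΣ'z)`.
-/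

open Matrix Real

section RankOne

variable {n R : Type*} [Fintype n] [CommRing R]

theorem dotProduct_mulVec_sub_smul_mul_vecMulVec_mul (S : Matrix n n R) (z : n → R) (β : R) :
    z ⬝ᵥ (S - β • (S * vecMulVec z z * S)) *ᵥ z = z ⬝ᵥ S *ᵥ z - β * (z ⬝ᵥ S *ᵥ z) ^ 2 := by
  have h : (S * vecMulVec z z * S) *ᵥ z = (z ⬝ᵥ S *ᵥ z) • S *ᵥ z := by
    rw [← mulVec_mulVec, ← mulVec_mulVec, vecMulVec_mulVec, op_smul_eq_smul, mulVec_smul]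
  rw [sub_mulVec, dotProduct_sub, smul_mulVec, h, dotProduct_smul, dotProduct_smul, smul_eq_mul,
    smul_eq_mul, sq]

theorem mul_dotProduct_add_smul_mulVec {y : R} (hy : y ^ 2 = 1) (S : Matrix n n R)
    (μ z : n → R) (α : R) :
    y * ((μ + (α * y) • S *ᵥ z) ⬝ᵥ z) = y * (μ ⬝ᵥ z) + α * (z ⬝ᵥ S *ᵥ z) := by
  rw [add_dotProduct, smul_dotProduct, dotProduct_comm (S *ᵥ z), smul_eq_mul]
  linear_combination (α * (z ⬝ᵥ S *ᵥ z)) * hy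

end RankOne

noncomputable def quadPosRoot (a c : ℝ) : ℝ := (-a + √(a ^ 2 + 4 * c)) / 2

section QuadPosRoot

variable {a c : ℝ}

theorem abs_lt_sqrt_sq_add_four_mul (hc : 0 < c) : |a| < √(a ^ 2 + 4 * c) :=
  (lt_sqrt (abs_nonneg a)).2 (by rw [sq_abs]; linarith)

theorem quadPosRoot_pos (hc : 0 < c) : 0 < quadPosRoot a c := by
  have := abs_lt_sqrt_sq_add_four_mul (a := a) hc
  unfold quadPosRoot
  linarith [le_abs_self a]

theorem quadPosRoot_add_pos (hc : 0 < c) : 0 < quadPosRoot a c + a := by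
  have := abs_lt_sqrt_sq_add_four_mul (a := a) hc
  unfold quadPosRoot
  linarith [neg_abs_le a]

theorem quadPosRoot_sq_add_mul (hc : 0 < c) : quadPosRoot a c ^ 2 + a * quadPosRoot a c = c := by
  have h := Real.sq_sqrt (by nlinarith : 0 ≤ a ^ 2 + 4 * c)
  unfold quadPosRoot
  linear_combination h / 4

theorem eq_quadPosRoot (hc : 0 < c) {t : ℝ} (ht : 0 ≤ t) (h : t ^ 2 + a * t = c) :
    t = quadPosRoot a c := by
  have hfac : (t - quadPosRoot a c) * (t + quadPosRoot a c + a) = 0 := by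
    linear_combination h - quadPosRoot_sq_add_mul hc
  have hpos : t + quadPosRoot a c + a ≠ 0 := by linarith [quadPosRoot_add_pos (a := a) hc]
  linarith [(mul_eq_zero.mp hfac).resolve_right hpos]

theorem sub_div_quadPosRoot_add_mul_sq (hc : 0 < c) {k : ℝ} (hk : k * c = a) :
    c - k / (quadPosRoot a c + a) * c ^ 2 = quadPosRoot a c ^ 2 := by
  have hroot := quadPosRoot_sq_add_mul (a := a) hc
  have hne : quadPosRoot a c + a ≠ 0 := (quadPosRoot_add_pos hc).ne'
  have hdown : k / (quadPosRoot a c + a) * c ^ 2 = a * quadPosRoot a c := by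
    rw [div_mul_eq_mul_div, div_eq_iff hne]
    linear_combination c * hk - a * hroot
  linear_combination -hdown - hroot

end QuadPosRoot

theorem unclipped_margin_eq_mul_quadPosRoot {υ m φ α : ℝ} (hυ : 0 < υ) (hφ : 0 < φ)
    (hα : α = 1 / (υ * (1 + φ ^ 2)) *
      (-(m * (1 + φ ^ 2 / 2)) + √(m ^ 2 * φ ^ 4 / 4 + υ * φ ^ 2 * (1 + φ ^ 2)))) :
    m + α * υ = φ * quadPosRoot (α * υ * φ) υ := by
  set r := √(m ^ 2 * φ ^ 4 / 4 + υ * φ ^ 2 * (1 + φ ^ 2))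
  have hr2 : r ^ 2 = m ^ 2 * φ ^ 4 / 4 + υ * φ ^ 2 * (1 + φ ^ 2) := Real.sq_sqrt (by positivity)
  have hr_ge : |m * φ ^ 2 / 2| ≤ r := abs_le_sqrt (by nlinarith [mul_pos hυ (pow_pos hφ 2)])
  have hζ : 0 < 1 + φ ^ 2 := by positivity
  have hx : (1 + φ ^ 2) * (α * υ) = -(m * (1 + φ ^ 2 / 2)) + r := by
    rw [hα]; field_simp
  have hw : 0 ≤ m + α * υ := by
    have : (1 + φ ^ 2) * (m + α * υ) = m * φ ^ 2 / 2 + r := by linear_combination hx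
    nlinarith [neg_abs_le (m * φ ^ 2 / 2)]
  have hquad : (m + α * υ) ^ 2 + φ ^ 2 * (α * υ) * (m + α * υ) = υ * φ ^ 2 := by
    have : (1 + φ ^ 2) * ((m + α * υ) ^ 2 + φ ^ 2 * (α * υ) * (m + α * υ) - υ * φ ^ 2) = 0 := by
      linear_combination ((1 + φ ^ 2) * (α * υ) + m * (1 + φ ^ 2 / 2) + r) * hx + hr2
    exact sub_eq_zero.mp ((mul_eq_zero.mp this).resolve_left hζ.ne')
  have ht := eq_quadPosRoot (a := α * υ * φ) hυ (t := (m + α * υ) / φ) (by positivity)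
    (by field_simp; linear_combination hquad)
  rw [← ht]
  field_simp

theorem cbr_unclipped_update_zero_loss_general
    (d : ℕ)
    (S : Matrix (Fin d) (Fin d) ℝ) (hS : S.PosDef)
    (z : Fin d → ℝ) (hz : z ≠ 0)
    (μ : Fin d → ℝ) (y : ℝ) (hy : y = 1 ∨ y = -1) (φ : ℝ) (hφ : 0 < φ)
    (υ m ψ ζ α u β : ℝ)
    (hυ : υ = z ⬝ᵥ S.mulVec z)
    (hm : m = y * (μ ⬝ᵥ z))
    (hψ : ψ = 1 + φ^2 / 2)
    (hζ : ζ = 1 + φ^2)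
    (hα : α = (1 / (υ * ζ)) * (-(m * ψ) + Real.sqrt (m^2 * φ^4 / 4 + υ * φ^2 * ζ)))
    (hu : u = (1/4) * (-(α * υ * φ) + Real.sqrt (α^2 * υ^2 * φ^2 + 4 * υ))^2)
    (hβ : β = α * φ / (Real.sqrt u + υ * α * φ))
    (μ' : Fin d → ℝ) (S' : Matrix (Fin d) (Fin d) ℝ)
    (hμ' : μ' = μ + (α * y) • S.mulVec z)
    (hS' : S' = S - β • (S * vecMulVec z z * S)) :
    y * (μ' ⬝ᵥ z) = φ * Real.sqrt (z ⬝ᵥ S'.mulVec z) ∧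
      max 0 (φ * Real.sqrt (z ⬝ᵥ S'.mulVec z) - y * (μ' ⬝ᵥ z)) = 0 := by
  subst hψ hζ
  have hυ_pos : 0 < υ := hυ ▸ hS.dotProduct_mulVec_pos hz
  have hy2 : y ^ 2 = 1 := by rcases hy with rfl | rfl <;> norm_num
  set t := quadPosRoot (α * υ * φ) υ
  have ht_nonneg : 0 ≤ t := (quadPosRoot_pos hυ_pos).le
  have hsqrt_u : √u = t := by
    rw [hu, ← sqrt_sq ht_nonneg]
    congr 1
    simp only [t, quadPosRoot]
    ring_nf
  have hcov : z ⬝ᵥ S' *ᵥ z = t ^ 2 := by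
    rw [hS', dotProduct_mulVec_sub_smul_mul_vecMulVec_mul, ← hυ, hβ, hsqrt_u,
      show υ * α * φ = α * υ * φ by ring]
    exact sub_div_quadPosRoot_add_mul_sq hυ_pos (by ring)
  have hmargin : y * (μ' ⬝ᵥ z) = φ * t := by
    rw [hμ', mul_dotProduct_add_smul_mulVec hy2, ← hυ, ← hm]
    exact unclipped_margin_eq_mul_quadPosRoot hυ_pos hφ hα
  have hzero_loss : y * (μ' ⬝ᵥ z) = φ * √(z ⬝ᵥ S' *ᵥ z) := by
    rw [hmargin, hcov, sqrt_sq ht_nonneg]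
  exact ⟨hzero_loss, by simp [hzero_loss]⟩

/-- **The unclipped CBR update attains the probabilistic margin exactly.** If the
unclipped coefficient `α` is nonnegative, then after the update `μ' = μ + αyΣz`,
`Σ' = Σ − βΣzzᵀΣ`, the signed margin satisfies `y μ'·z = φ√(zᵀΣ'z)`, so the
loss `max(0, φ√(zᵀΣ'z) − y μ'·z)` vanishes. -/
theorem cbr_unclipped_update_zero_loss
    (d : ℕ) (hd : 1 ≤ d)
    (S : Matrix (Fin d) (Fin d) ℝ) (hS : S.PosDef)
    (z : Fin d → ℝ) (hz : z ≠ 0)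
    (μ : Fin d → ℝ) (y : ℝ) (hy : y = 1 ∨ y = -1) (φ : ℝ) (hφ : 0 < φ)
    (υ m ψ ζ α u β : ℝ)
    (hυ : υ = z ⬝ᵥ S.mulVec z)
    (hm : m = y * (μ ⬝ᵥ z))
    (hψ : ψ = 1 + φ^2 / 2)
    (hζ : ζ = 1 + φ^2)
    (hα : α = (1 / (υ * ζ)) * (-(m * ψ) + Real.sqrt (m^2 * φ^4 / 4 + υ * φ^2 * ζ)))
    (hαnn : 0 ≤ α)
    (hu : u = (1/4) * (-(α * υ * φ) + Real.sqrt (α^2 * υ^2 * φ^2 + 4 * υ))^2)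
    (hβ : β = α * φ / (Real.sqrt u + υ * α * φ))
    (μ' : Fin d → ℝ) (S' : Matrix (Fin d) (Fin d) ℝ)
    (hμ' : μ' = μ + (α * y) • S.mulVec z)
    (hS' : S' = S - β • (S * vecMulVec z z * S)) :
    y * (μ' ⬝ᵥ z) = φ * Real.sqrt (z ⬝ᵥ S'.mulVec z) ∧
      max 0 (φ * Real.sqrt (z ⬝ᵥ S'.mulVec z) - y * (μ' ⬝ᵥ z)) = 0 :=
  cbr_unclipped_update_zero_loss_general d S hS z hz μ y hy φ hφ υ m ψ ζ α u β hυ hm hψ hζ hα hu hβ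
    μ' S' hμ' hS'
end

section
/- Let υ > 0, φ > 0, and m ∈ ℝ, and set ψ = 1 + φ²/2 and ζ = 1 + φ². Then α̂ = (1/(υζ))·( −mψ + √(m²φ⁴/4 + υφ²ζ) ) is a real root of the quadratic equation ζυ²·α² + 2mψυ·α + (m² − υφ²) = 0, and moreover α̂ > 0 if and only if m < φ·√υ. -/
open Real

/-!
With `s = √(m²φ⁴/4 + υφ²ζ)`, the discriminant of the quadratic is `(2υs)²`, and `α̂` is the
root `(-2mψυ + 2υs) / (2ζυ²)` of the quadratic formula. Its sign is that of `s - mψ`, and since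
`ψ² = ζ + φ⁴/4` we have `s² - (mψ)² = ζ((φ√υ)² - m²)`, which, as `mψ` and `m` have the same
sign, gives `mψ < s ↔ m < φ√υ`.
-/

theorem lt_iff_lt_of_sq_sub_sq_eq_mul {R : Type*} [CommRing R] [LinearOrder R]
    [IsStrictOrderedRing R] {a b c d k : R} (hb : 0 < b) (hd : 0 < d) (hk : 0 < k)
    (hac : 0 < a ↔ 0 < c) (h : b ^ 2 - a ^ 2 = k * (d ^ 2 - c ^ 2)) : a < b ↔ c < d := by
  rcases le_or_gt a 0 with ha | ha
  · have hc : c ≤ 0 := not_lt.mp (mt hac.mpr ha.not_gt)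
    exact ⟨fun _ ↦ hc.trans_lt hd, fun _ ↦ ha.trans_lt hb⟩
  · have hc : 0 < c := hac.mp ha
    rw [← sq_lt_sq₀ ha.le hb.le, ← sq_lt_sq₀ hc.le hd.le, ← sub_pos, h,
      mul_pos_iff_of_pos_left hk, sub_pos]

/-- **The unclipped CBR coefficient is a root of the update quadratic.** With
`ψ = 1 + φ²/2` and `ζ = 1 + φ²`, the value
`α̂ = (1/(υζ))(−mψ + √(m²φ⁴/4 + υφ²ζ))` satisfies `ζυ²α̂² + 2mψυα̂ + (m² − υφ²) = 0`,
and `α̂ > 0` if and only if `m < φ√υ`. -/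
theorem cbr_coefficient_root_and_positivity
    (υ φ m : ℝ) (hυ : 0 < υ) (hφ : 0 < φ)
    (ψ ζ αhat : ℝ)
    (hψ : ψ = 1 + φ^2 / 2)
    (hζ : ζ = 1 + φ^2)
    (hαhat : αhat = (1 / (υ * ζ)) *
      (-(m * ψ) + Real.sqrt (m^2 * φ^4 / 4 + υ * φ^2 * ζ))) :
    ζ * υ^2 * αhat^2 + 2 * m * ψ * υ * αhat + (m^2 - υ * φ^2) = 0 ∧
      (0 < αhat ↔ m < φ * Real.sqrt υ) := by
  have hζ_pos : 0 < ζ := by rw [hζ]; positivity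
  have hψ_sq : ψ ^ 2 = ζ + φ ^ 4 / 4 := by rw [hψ, hζ]; ring
  set s := √(m ^ 2 * φ ^ 4 / 4 + υ * φ ^ 2 * ζ)
  have hs : 0 < s := sqrt_pos.mpr (by positivity)
  have hs_sq : s ^ 2 = m ^ 2 * φ ^ 4 / 4 + υ * φ ^ 2 * ζ := sq_sqrt (by positivity)
  have hαhat_root : αhat = (-(2 * m * ψ * υ) + 2 * υ * s) / (2 * (ζ * υ ^ 2)) := by
    rw [hαhat]; field_simp
  constructor
  · have hdiscrim : discrim (ζ * υ ^ 2) (2 * m * ψ * υ) (m ^ 2 - υ * φ ^ 2)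
        = (2 * υ * s) * (2 * υ * s) := by
      rw [discrim]; linear_combination (4 * υ ^ 2) * (m ^ 2 * hψ_sq - hs_sq)
    rw [sq αhat]
    exact (quadratic_eq_zero_iff (by positivity) hdiscrim αhat).mpr (.inl hαhat_root)
  · have hψ_pos : 0 < ψ := by rw [hψ]; positivity
    have hsign : 0 < m * ψ ↔ 0 < m := mul_pos_iff_of_pos_right hψ_pos
    have hsq_diff : s ^ 2 - (m * ψ) ^ 2 = ζ * ((φ * √υ) ^ 2 - m ^ 2) := by
      rw [mul_pow φ, sq_sqrt hυ.le]; linear_combination hs_sq - m ^ 2 * hψ_sq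
    rw [hαhat, mul_pos_iff_of_pos_left (by positivity), ← sub_eq_neg_add, sub_pos]
    exact lt_iff_lt_of_sq_sub_sq_eq_mul hs (by positivity) hζ_pos hsign hsq_diff
end
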